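/- Let E be a real inner product space, let N ≥ 1, and let L_1, …, L_N : E → ℝ be differentiable functions with global loss L(ω) = (1/N) Σ_{i=1}^N L_i(ω). Assume the gradient of L is Lipschitz with constant L₁ ≥ 0 (L₁-smoothness). Fix ω_t ∈ E, a learning rate η > 0, and set ω_{t+1} = ω_t − η · (1/N) Σ_{i=1}^N ∇L_i(ω_t). Assume (i) δ-local dissimilarity at ω_t: (1/N) Σ_{i=1}^N ‖∇L_i(ω_t)‖² ≤ δ² ‖∇L(ω_t)‖², and (ii) the averaged gradient correlation bound (1/N) Σ_{i=1}^N ⟨∇L(ω_t), ∇L_i(ω_t)⟩ ≥ σ². Then L(ω_{t+1}) ≤ L(ω_t) + (L₁ η² / 2) δ² ‖∇L(ω_t)‖² − η σ². -/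

import Mathlib

/-!
Along the segment `t ↦ x + t • d`, the function
`f (x + t • d) - t * ⟪∇f x, d⟫ - K / 2 * t ^ 2 * ‖d‖ ^ 2` has derivative
`⟪∇f (x + t • d) - ∇f x, d⟫ - K * t * ‖d‖ ^ 2 ≤ 0` for `t ≥ 0`, which gives the descent lemma.
For the step `d = -η • v`, with `v` the averaged client gradient, the linear term is `-η` times
the averaged gradient correlation, at most `-η σ²`, and by Jensen `‖v‖²` is at most the averaged
squared client gradient norm, hence at most `δ² ‖∇L‖²`.
-/

open Finset
open scoped RealInnerProductSpace

section

variable {E : Type*} [NormedAddCommGroup E] [InnerProductSpace ℝ E]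

theorem norm_sq_average_le_average_norm_sq {ι : Type*} [Fintype ι] (v : ι → E) :
    ‖(1 / Fintype.card ι : ℝ) • ∑ i, v i‖ ^ 2 ≤ (1 / Fintype.card ι : ℝ) * ∑ i, ‖v i‖ ^ 2 := by
  have hnorm : ‖(1 / Fintype.card ι : ℝ) • ∑ i, v i‖ ≤ (∑ i, ‖v i‖) / Fintype.card ι := by
    rw [norm_smul, Real.norm_of_nonneg (by positivity), one_div_mul_eq_div]
    gcongr
    exact norm_sum_le _ _
  calc ‖(1 / Fintype.card ι : ℝ) • ∑ i, v i‖ ^ 2 ≤ ((∑ i, ‖v i‖) / Fintype.card ι) ^ 2 := by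
        gcongr
    _ ≤ (∑ i, ‖v i‖ ^ 2) / Fintype.card ι := by
        simpa using sum_div_card_sq_le_sum_sq_div_card (s := univ) (f := fun i => ‖v i‖)
    _ = _ := by rw [one_div_mul_eq_div]

variable [CompleteSpace E]

theorem inner_gradient_sub_le_of_lipschitz_gradient {f : E → ℝ} {K : ℝ}
    (hlip : ∀ x y, ‖gradient f x - gradient f y‖ ≤ K * ‖x - y‖) (x d : E) {t : ℝ} (ht : 0 ≤ t) :
    ⟪gradient f (x + t • d) - gradient f x, d⟫ ≤ K * t * ‖d‖ ^ 2 :=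
  calc ⟪gradient f (x + t • d) - gradient f x, d⟫
      ≤ ‖gradient f (x + t • d) - gradient f x‖ * ‖d‖ := real_inner_le_norm _ _
    _ ≤ K * ‖x + t • d - x‖ * ‖d‖ := by gcongr; exact hlip _ _
    _ = K * t * ‖d‖ ^ 2 := by
        rw [add_sub_cancel_left, norm_smul, Real.norm_of_nonneg ht]; ring

/-- The descent lemma. -/
theorem apply_add_le_of_lipschitz_gradient {f : E → ℝ} (hf : Differentiable ℝ f) {K : ℝ}
    (hlip : ∀ x y, ‖gradient f x - gradient f y‖ ≤ K * ‖x - y‖) (x d : E) :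
    f (x + d) ≤ f x + ⟪gradient f x, d⟫ + K / 2 * ‖d‖ ^ 2 := by
  set g : ℝ → ℝ := fun t => f (x + t • d) - t * ⟪gradient f x, d⟫ - K / 2 * t ^ 2 * ‖d‖ ^ 2
  set g' : ℝ → ℝ := fun t =>
    ⟪gradient f (x + t • d), d⟫ - ⟪gradient f x, d⟫ - K * t * ‖d‖ ^ 2
  have hg : ∀ t, HasDerivAt g (g' t) t := by
    intro t
    have hline : HasDerivAt (fun t : ℝ => x + t • d) d t := by
      simpa using ((hasDerivAt_id t).smul_const d).const_add x
    have hft := (hasGradientAt_iff_hasFDerivAt.mp (hf _).hasGradientAt).comp_hasDerivAt t hline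
    have := ((hft.sub ((hasDerivAt_id t).mul_const ⟪gradient f x, d⟫)).sub
      (((hasDerivAt_pow 2 t).const_mul (K / 2)).mul_const (‖d‖ ^ 2)))
    exact this.congr_deriv (by simp only [g', InnerProductSpace.toDual_apply_apply]; ring)
  have hanti : AntitoneOn g (Set.Ici 0) := by
    refine antitoneOn_of_hasDerivWithinAt_nonpos (convex_Ici 0)
      (fun t _ => (hg t).continuousAt.continuousWithinAt) (fun t _ => (hg t).hasDerivWithinAt)
      fun t ht => ?_
    rw [interior_Ici] at ht
    have := inner_gradient_sub_le_of_lipschitz_gradient hlip x d ht.le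
    simp only [g', ← inner_sub_left]
    linarith
  have := hanti Set.self_mem_Ici (zero_le_one' ℝ) zero_le_one
  simp only [g, one_smul, zero_smul, add_zero, one_pow, one_mul, zero_mul, zero_pow two_ne_zero,
    mul_zero, sub_zero] at this
  linarith

end

theorem lemma1_descent_general
    {E : Type*} [NormedAddCommGroup E] [InnerProductSpace ℝ E] [CompleteSpace E]
    (N : ℕ) (L : Fin N → E → ℝ)
    (hdiff : ∀ i, Differentiable ℝ (L i))
    (Lg : E → ℝ) (hLg : Lg = fun ω => (1 / N : ℝ) * ∑ i, L i ω)
    (L₁ : ℝ) (hL₁ : 0 ≤ L₁)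
    (hsmooth : ∀ x y : E, ‖gradient Lg x - gradient Lg y‖ ≤ L₁ * ‖x - y‖)
    (ωt : E) (η : ℝ) (hη : 0 < η)
    (ωt1 : E) (hupd : ωt1 = ωt - η • ((1 / N : ℝ) • ∑ i, gradient (L i) ωt))
    (δ σ : ℝ)
    (hdissim : (1 / N : ℝ) * ∑ i, ‖gradient (L i) ωt‖ ^ 2
        ≤ δ ^ 2 * ‖gradient Lg ωt‖ ^ 2)
    (hcorr : σ ^ 2 ≤ (1 / N : ℝ) * ∑ i,
        (inner ℝ (gradient Lg ωt) (gradient (L i) ωt) : ℝ)) :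
    Lg ωt1 ≤ Lg ωt + (L₁ * η ^ 2 / 2) * δ ^ 2 * ‖gradient Lg ωt‖ ^ 2 - η * σ ^ 2 := by
  set v := (1 / N : ℝ) • ∑ i, gradient (L i) ωt
  have hLg_diff : Differentiable ℝ Lg :=
    hLg ▸ (Differentiable.fun_sum fun i _ => hdiff i).const_mul _
  have hinner :
      ⟪gradient Lg ωt, v⟫ = (1 / N : ℝ) * ∑ i, ⟪gradient Lg ωt, gradient (L i) ωt⟫ := by
    rw [real_inner_smul_right, inner_sum]
  have hv : ‖v‖ ^ 2 ≤ δ ^ 2 * ‖gradient Lg ωt‖ ^ 2 := by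
    have := norm_sq_average_le_average_norm_sq fun i => gradient (L i) ωt
    rw [Fintype.card_fin] at this
    exact this.trans hdissim
  calc Lg ωt1 = Lg (ωt + -(η • v)) := by rw [hupd, sub_eq_add_neg]
    _ ≤ Lg ωt + ⟪gradient Lg ωt, -(η • v)⟫ + L₁ / 2 * ‖-(η • v)‖ ^ 2 :=
        apply_add_le_of_lipschitz_gradient hLg_diff hsmooth ωt _
    _ = Lg ωt - η * ⟪gradient Lg ωt, v⟫ + L₁ * η ^ 2 / 2 * ‖v‖ ^ 2 := by
        rw [inner_neg_right, real_inner_smul_right, norm_neg, norm_smul, Real.norm_of_nonneg hη.le]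
        ring
    _ ≤ _ := by
        rw [hinner]
        linarith [mul_le_mul_of_nonneg_left hv (by positivity : 0 ≤ L₁ * η ^ 2 / 2),
          mul_le_mul_of_nonneg_left hcorr hη.le]

/-- Lemma 1 (MP-FedCL): per-global-round descent bound before multi-prototype
aggregation. -/
theorem lemma1_descent
    {E : Type*} [NormedAddCommGroup E] [InnerProductSpace ℝ E] [CompleteSpace E]
    (N : ℕ) (hN : 1 ≤ N) (L : Fin N → E → ℝ)
    (hdiff : ∀ i, Differentiable ℝ (L i))
    (Lg : E → ℝ) (hLg : Lg = fun ω => (1 / N : ℝ) * ∑ i, L i ω)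
    (L₁ : ℝ) (hL₁ : 0 ≤ L₁)
    (hsmooth : ∀ x y : E, ‖gradient Lg x - gradient Lg y‖ ≤ L₁ * ‖x - y‖)
    (ωt : E) (η : ℝ) (hη : 0 < η)
    (ωt1 : E) (hupd : ωt1 = ωt - η • ((1 / N : ℝ) • ∑ i, gradient (L i) ωt))
    (δ σ : ℝ)
    (hdissim : (1 / N : ℝ) * ∑ i, ‖gradient (L i) ωt‖ ^ 2
        ≤ δ ^ 2 * ‖gradient Lg ωt‖ ^ 2)
    (hcorr : σ ^ 2 ≤ (1 / N : ℝ) * ∑ i,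
        (inner ℝ (gradient Lg ωt) (gradient (L i) ωt) : ℝ)) :
    Lg ωt1 ≤ Lg ωt + (L₁ * η ^ 2 / 2) * δ ^ 2 * ‖gradient Lg ωt‖ ^ 2 - η * σ ^ 2 :=
  lemma1_descent_general N L hdiff Lg hLg L₁ hL₁ hsmooth ωt η hη ωt1 hupd δ σ hdissim hcorr
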